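/- arXiv:2008.08443 — 5 statements merged into one kernel-verified Lean document; each statement's English description precedes it below -/
import Mathlib

section
/- Let S and T be commutative rings, π : S → T and ι : T → S ring homomorphisms with π ∘ ι = id, and F : T → T a ring endomorphism. For x ∈ S define x^T := ι(π(x)), x^⊥ := x − x^T, and x^F := ι(F(π(x))). Define a new multiplication on S by x * y := x^T y^T + x^F y^⊥ + x^⊥ y^F + x^⊥ y^⊥. Then (S, +, *) is a commutative ring with the same unit 1, and π and ι are ring homomorphisms with respect to this new multiplication. -/
/-!
Writing `x = xᵀ + x^⊥` splits `S` as `ι(T) ⊕ ker π`. The twisted product keeps the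
multiplication of `ι(T)` and of `ker π`, but lets `ι(T)` act on `ker π` through `F`. Since `π`
is multiplicative for it, the components of a product are `(x * y)ᵀ = xᵀ yᵀ`,
`(x * y)^F = x^F y^F` and `(x * y)^⊥ = x^F y^⊥ + x^⊥ y^F + x^⊥ y^⊥`, and associativity becomes a
ring identity in the components of `x`, `y`, `z`.
-/

namespace TwistedMul

variable {S T : Type*} [CommRing S] [CommRing T] (π : S →+* T) (ι : T →+* S) (F : T →+* T)

def tpart (x : S) : S := ι (π x)

def perp (x : S) : S := x - tpart π ι x

def fpart (x : S) : S := ι (F (π x))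

def twistedMul (x y : S) : S :=
  tpart π ι x * tpart π ι y + fpart π ι F x * perp π ι y + perp π ι x * fpart π ι F y +
    perp π ι x * perp π ι y

variable {π ι}

theorem map_perp (hπι : Function.LeftInverse π ι) (x : S) : π (perp π ι x) = 0 := by
  simp [perp, tpart, hπι (π x)]

theorem perp_map_eq_zero (hπι : Function.LeftInverse π ι) (t : T) : perp π ι (ι t) = 0 := by
  simp [perp, tpart, hπι t]

theorem map_twistedMul (hπι : Function.LeftInverse π ι) (x y : S) :
    π (twistedMul π ι F x y) = π x * π y := by
  simp [twistedMul, map_perp hπι, tpart, hπι _]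

theorem tpart_twistedMul (hπι : Function.LeftInverse π ι) (x y : S) :
    tpart π ι (twistedMul π ι F x y) = tpart π ι x * tpart π ι y := by
  rw [tpart, map_twistedMul F hπι, map_mul, tpart, tpart]

theorem fpart_twistedMul (hπι : Function.LeftInverse π ι) (x y : S) :
    fpart π ι F (twistedMul π ι F x y) = fpart π ι F x * fpart π ι F y := by
  rw [fpart, map_twistedMul F hπι, map_mul, map_mul, fpart, fpart]

theorem perp_twistedMul (hπι : Function.LeftInverse π ι) (x y : S) :
    perp π ι (twistedMul π ι F x y) = fpart π ι F x * perp π ι y + perp π ι x * fpart π ι F y +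
      perp π ι x * perp π ι y := by
  rw [perp, tpart_twistedMul F hπι, twistedMul]
  ring

variable (π ι)

theorem twistedMul_comm (x y : S) : twistedMul π ι F x y = twistedMul π ι F y x := by
  unfold twistedMul
  ring

theorem twistedMul_add (x y z : S) :
    twistedMul π ι F x (y + z) = twistedMul π ι F x y + twistedMul π ι F x z := by
  simp only [twistedMul, perp, tpart, fpart, map_add]
  ring

theorem one_twistedMul (x : S) : twistedMul π ι F 1 x = x := by
  simp only [twistedMul, perp, tpart, fpart, map_one]
  ring

variable {π ι}

theorem twistedMul_assoc (hπι : Function.LeftInverse π ι) (x y z : S) :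
    twistedMul π ι F (twistedMul π ι F x y) z = twistedMul π ι F x (twistedMul π ι F y z) := by
  conv_lhs => rw [twistedMul]
  conv_rhs => rw [twistedMul]
  rw [tpart_twistedMul F hπι, tpart_twistedMul F hπι,
    fpart_twistedMul F hπι, fpart_twistedMul F hπι, perp_twistedMul F hπι,
    perp_twistedMul F hπι]
  ring

theorem twistedMul_map (hπι : Function.LeftInverse π ι) (a b : T) :
    twistedMul π ι F (ι a) (ι b) = ι (a * b) := by
  simp [twistedMul, perp_map_eq_zero hπι, tpart, hπι _]

end TwistedMul

open TwistedMul in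
/-- Twisting the multiplication of `S` along `F : T → T`, via a splitting
`π : S → T`, `ι : T → S` with `π ∘ ι = id`, yields a commutative ring with the
same addition and unit, and `π`, `ι` remain ring homomorphisms. -/
theorem stmt0 {S T : Type*} [CommRing S] [CommRing T]
    (π : S →+* T) (ι : T →+* S) (hπι : ∀ t, π (ι t) = t) (F : T →+* T) :
    let tT : S → S := fun x => ι (π x)
    let perp : S → S := fun x => x - tT x
    let fF : S → S := fun x => ι (F (π x))
    let mul : S → S → S := fun x y =>
      tT x * tT y + fF x * perp y + perp x * fF y + perp x * perp y
    (∀ x y, mul x y = mul y x) ∧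
    (∀ x y z, mul (mul x y) z = mul x (mul y z)) ∧
    (∀ x y z, mul x (y + z) = mul x y + mul x z) ∧
    (∀ x, mul 1 x = x) ∧
    (∀ x y, π (mul x y) = π x * π y) ∧
    (∀ a b, mul (ι a) (ι b) = ι (a * b)) :=
  ⟨twistedMul_comm π ι F, twistedMul_assoc F hπι, twistedMul_add π ι F, one_twistedMul π ι F,
    map_twistedMul F hπι, twistedMul_map F hπι⟩
end

section
/- In the twisted-ring setting, suppose additionally there is a bijection F̃ : ker(π) → ker(π) that is additive, multiplicative, and satisfies F̃(ι(a)·b) = ι(F(a))·F̃(b) for all a ∈ T and b ∈ ker(π). Then the map x ↦ x^T + F̃(x^⊥) is a ring isomorphism from the original ring (S, +, ·) to the twisted ring (S, +, *), and this isomorphism commutes with ι and π. -/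
/-!
Every `x` splits as `x = ι (π x) + x^⊥` with `x^⊥ ∈ ker π`, and `Φ` keeps the first summand
and applies `F̃` to the second, so `π ∘ Φ = π` and bijectivity of `Φ` reduces to that of `F̃`
on `ker π`. For multiplicativity, `(x y)^⊥ = x^T y^⊥ + x^⊥ y^T + x^⊥ y^⊥`; semilinearity turns
`F̃ (x^T y^⊥)` into `x^F F̃ (y^⊥)` and multiplicativity gives `F̃ (x^⊥ y^⊥) = F̃ (x^⊥) F̃ (y^⊥)`,
which are exactly the terms of the twisted product of `Φ x` and `Φ y`.
-/

namespace TwistedRing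

variable {S T : Type*} [CommRing S] [CommRing T] (π : S →+* T) (ι : T →+* S)

def twistedMul (F : T →+* T) (x y : S) : S :=
  ι (π x) * ι (π y) + ι (F (π x)) * (y - ι (π y)) + (x - ι (π x)) * ι (F (π y)) +
    (x - ι (π x)) * (y - ι (π y))

def twistMap (Ft : S → S) (x : S) : S :=
  ι (π x) + Ft (x - ι (π x))

variable {π ι}

theorem map_sub_ι_π (h : Function.LeftInverse π ι) (x : S) : π (x - ι (π x)) = 0 := by
  rw [map_sub, h, sub_self]

theorem sub_ι_π_mul (x y : S) :
    x * y - ι (π (x * y)) = ι (π x) * (y - ι (π y)) + (x - ι (π x)) * ι (π y) +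
      (x - ι (π x)) * (y - ι (π y)) := by
  rw [map_mul, map_mul]
  ring

theorem map_zero_of_map_add {Ft : S → S}
    (hFadd : ∀ x y, π x = 0 → π y = 0 → Ft (x + y) = Ft x + Ft y) : Ft 0 = 0 := by
  simpa using hFadd 0 0 (map_zero π) (map_zero π)

variable {Ft : S → S}

theorem π_twistMap (h : Function.LeftInverse π ι) (hmem : ∀ x, π x = 0 → π (Ft x) = 0)
    (x : S) : π (twistMap π ι Ft x) = π x := by
  rw [twistMap, map_add, h, hmem _ (map_sub_ι_π h x), add_zero]

theorem twistMap_sub_ι_π (h : Function.LeftInverse π ι) (hmem : ∀ x, π x = 0 → π (Ft x) = 0)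
    (x : S) : twistMap π ι Ft x - ι (π (twistMap π ι Ft x)) = Ft (x - ι (π x)) := by
  rw [π_twistMap h hmem, twistMap, add_sub_cancel_left]

theorem twistMap_ι (h : Function.LeftInverse π ι)
    (hFadd : ∀ x y, π x = 0 → π y = 0 → Ft (x + y) = Ft x + Ft y) (a : T) :
    twistMap π ι Ft (ι a) = ι a := by
  rw [twistMap, h, sub_self, map_zero_of_map_add hFadd, add_zero]

theorem twistMap_one (h : Function.LeftInverse π ι)
    (hFadd : ∀ x y, π x = 0 → π y = 0 → Ft (x + y) = Ft x + Ft y) :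
    twistMap π ι Ft 1 = 1 := by
  simpa only [map_one] using twistMap_ι h hFadd 1

theorem twistMap_add (h : Function.LeftInverse π ι)
    (hFadd : ∀ x y, π x = 0 → π y = 0 → Ft (x + y) = Ft x + Ft y) (x y : S) :
    twistMap π ι Ft (x + y) = twistMap π ι Ft x + twistMap π ι Ft y := by
  have hsplit : x + y - ι (π (x + y)) = (x - ι (π x)) + (y - ι (π y)) := by
    rw [map_add, map_add]; ring
  rw [twistMap, twistMap, twistMap, hsplit, hFadd _ _ (map_sub_ι_π h x) (map_sub_ι_π h y),
    map_add, map_add]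
  ring

theorem twistMap_injective (h : Function.LeftInverse π ι)
    (hmem : ∀ x, π x = 0 → π (Ft x) = 0)
    (hinj : ∀ x y, π x = 0 → π y = 0 → Ft x = Ft y → x = y) :
    Function.Injective (twistMap π ι Ft) := by
  intro x y hxy
  have hπ : π x = π y := by rw [← π_twistMap h hmem x, hxy, π_twistMap h hmem]
  have hperp : x - ι (π x) = y - ι (π y) := by
    refine hinj _ _ (map_sub_ι_π h x) (map_sub_ι_π h y) ?_
    rw [← twistMap_sub_ι_π h hmem, ← twistMap_sub_ι_π h hmem, hxy]
  rwa [hπ, sub_left_inj] at hperp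

theorem twistMap_surjective (h : Function.LeftInverse π ι)
    (hsurj : ∀ y, π y = 0 → ∃ x, π x = 0 ∧ Ft x = y) :
    Function.Surjective (twistMap π ι Ft) := by
  intro z
  obtain ⟨b, hb, hFb⟩ := hsurj _ (map_sub_ι_π h z)
  have hπ : π (ι (π z) + b) = π z := by rw [map_add, h, hb, add_zero]
  refine ⟨ι (π z) + b, ?_⟩
  rw [twistMap, hπ, add_sub_cancel_left, hFb, add_sub_cancel]

theorem twistMap_mul (F : T →+* T) (h : Function.LeftInverse π ι)
    (hmem : ∀ x, π x = 0 → π (Ft x) = 0)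
    (hFadd : ∀ x y, π x = 0 → π y = 0 → Ft (x + y) = Ft x + Ft y)
    (hFmul : ∀ x y, π x = 0 → π y = 0 → Ft (x * y) = Ft x * Ft y)
    (hFsemi : ∀ (a : T) (b : S), π b = 0 → Ft (ι a * b) = ι (F a) * Ft b) (x y : S) :
    twistMap π ι Ft (x * y) = twistedMul π ι F (twistMap π ι Ft x) (twistMap π ι Ft y) := by
  have hx := map_sub_ι_π h x
  have hy := map_sub_ι_π h y
  have h₁ : π (ι (π x) * (y - ι (π y))) = 0 := by rw [map_mul, hy, mul_zero]
  have h₂ : π ((x - ι (π x)) * ι (π y)) = 0 := by rw [map_mul, hx, zero_mul]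
  have h₃ : π ((x - ι (π x)) * (y - ι (π y))) = 0 := by rw [map_mul, hx, zero_mul]
  have hperp : Ft (x * y - ι (π (x * y))) =
      ι (F (π x)) * Ft (y - ι (π y)) + Ft (x - ι (π x)) * ι (F (π y)) +
        Ft (x - ι (π x)) * Ft (y - ι (π y)) := by
    rw [sub_ι_π_mul, hFadd _ _ (by rw [map_add, h₁, h₂, add_zero]) h₃, hFadd _ _ h₁ h₂,
      hFsemi _ _ hy, mul_comm _ (ι (π y)), hFsemi _ _ hx, hFmul _ _ hx hy]
    ring
  rw [twistedMul, twistMap_sub_ι_π h hmem, twistMap_sub_ι_π h hmem, π_twistMap h hmem,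
    π_twistMap h hmem, twistMap, hperp, map_mul, map_mul]
  ring

end TwistedRing

open TwistedRing in
/-- Given additionally a bijection `Ft` of `ker π` which is additive, multiplicative
and semilinear over `F`, the map `x ↦ x^T + Ft (x^⊥)` is a ring isomorphism from the
original ring `S` to the twisted ring, commuting with `ι` and `π`. -/
theorem stmt1 {S T : Type*} [CommRing S] [CommRing T]
    (π : S →+* T) (ι : T →+* S) (hπι : ∀ t, π (ι t) = t) (F : T →+* T)
    (Ft : S → S)
    (hmem : ∀ x, π x = 0 → π (Ft x) = 0)
    (hinj : ∀ x y, π x = 0 → π y = 0 → Ft x = Ft y → x = y)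
    (hsurj : ∀ y, π y = 0 → ∃ x, π x = 0 ∧ Ft x = y)
    (hFadd : ∀ x y, π x = 0 → π y = 0 → Ft (x + y) = Ft x + Ft y)
    (hFmul : ∀ x y, π x = 0 → π y = 0 → Ft (x * y) = Ft x * Ft y)
    (hFsemi : ∀ (a : T) (b : S), π b = 0 → Ft (ι a * b) = ι (F a) * Ft b) :
    let tT : S → S := fun x => ι (π x)
    let perp : S → S := fun x => x - tT x
    let fF : S → S := fun x => ι (F (π x))
    let tmul : S → S → S := fun x y =>
      tT x * tT y + fF x * perp y + perp x * fF y + perp x * perp y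
    let Φ : S → S := fun x => tT x + Ft (perp x)
    Function.Bijective Φ ∧
    (∀ x y, Φ (x + y) = Φ x + Φ y) ∧
    (∀ x y, Φ (x * y) = tmul (Φ x) (Φ y)) ∧
    Φ 1 = 1 ∧
    (∀ a, Φ (ι a) = ι a) ∧
    (∀ x, π (Φ x) = π x) :=
  ⟨⟨twistMap_injective hπι hmem hinj, twistMap_surjective hπι hsurj⟩,
    twistMap_add hπι hFadd,
    twistMap_mul F hπι hmem hFadd hFmul hFsemi,
    twistMap_one hπι hFadd,
    twistMap_ι hπι hFadd,
    π_twistMap hπι hmem⟩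
end

section
/- Let K ⊆ L be fields of characteristic p with L = K(t^{1/p}) for some t ∈ K, where t^{1/p} ∉ K. Let ∂ be a derivation of Frobenius on K (additive, ∂(xy) = x^p∂y + y^p∂x) with ∂(t) = 0. Then ∂ extends uniquely to a derivation of Frobenius on L by setting ∂(t^{1/p}) = 0 on the new generator; more precisely, there exists a derivation of Frobenius ∂_L on L restricting to ∂ on K. -/
/-!
Write `L = K[X] / (X ^ p - t)`, the polynomial `X ^ p - t` being irreducible because `t` has no
`p`-th root. On `K[X]` the rule `a X ^ n ↦ ∂a X ^ (p n)` is a derivation of Frobenius, since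
`f ^ p` is obtained from `f` by raising coefficients to the `p`-th power and `X` to `X ^ p`.
It kills `X ^ p - t` (as `∂1 = ∂t = 0`), so by the Leibniz rule it maps the ideal
`(X ^ p - t)` into itself and descends to `L`, where it sends `s`, the image of `X`, to `0`.
-/

open Polynomial

structure IsFrobeniusDerivation {R : Type*} [CommRing R] (p : ℕ) (D : R → R) : Prop where
  map_add : ∀ x y, D (x + y) = D x + D y
  map_mul : ∀ x y, D (x * y) = x ^ p * D y + y ^ p * D x

namespace IsFrobeniusDerivation

variable {R : Type*} [CommRing R] {p : ℕ} {D : R → R}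

theorem map_sub (hD : IsFrobeniusDerivation p D) (x y : R) : D (x - y) = D x - D y := by
  rw [eq_sub_iff_add_eq, ← hD.map_add, sub_add_cancel]

theorem map_one (hD : IsFrobeniusDerivation p D) : D 1 = 0 := by
  simpa using hD.map_mul 1 1

theorem map_mul_of_eq_zero (hD : IsFrobeniusDerivation p D) {g : R} (hg : D g = 0) (h : R) :
    D (g * h) = g ^ p * D h := by
  rw [hD.map_mul, hg, mul_zero, add_zero]

theorem exists_comp_eq_of_surjective {S : Type*} [CommRing S] (hD : IsFrobeniusDerivation p D)
    (φ : R →+* S) (hφ : Function.Surjective φ) (hker : ∀ x, φ x = 0 → φ (D x) = 0) :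
    ∃ D' : S → S, IsFrobeniusDerivation p D' ∧ ∀ x, D' (φ x) = φ (D x) := by
  have hwd : ∀ x y, φ x = φ y → φ (D x) = φ (D y) := fun x y hxy => by
    rw [← sub_eq_zero, ← _root_.map_sub, ← hD.map_sub]
    exact hker _ (by rw [_root_.map_sub, hxy, sub_self])
  have hcomp : ∀ x, φ (D (Function.surjInv hφ (φ x))) = φ (D x) := fun x =>
    hwd _ _ (Function.surjInv_eq hφ _)
  refine ⟨fun y => φ (D (Function.surjInv hφ y)), ⟨?_, ?_⟩, hcomp⟩
  · refine hφ.forall₂.mpr fun x y => ?_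
    rw [← _root_.map_add, hcomp, hcomp, hcomp, hD.map_add, _root_.map_add]
  · refine hφ.forall₂.mpr fun x y => ?_
    rw [← _root_.map_mul, hcomp, hcomp, hcomp, hD.map_mul, _root_.map_add, _root_.map_mul,
      _root_.map_mul, map_pow, map_pow]

end IsFrobeniusDerivation

namespace Polynomial

variable {R : Type*} [CommRing R]

noncomputable def frobeniusDerivation (p : ℕ) (d : R →+ R) : R[X] →+ R[X] where
  toFun f := f.sum fun n a => monomial (p * n) (d a)
  map_zero' := sum_zero_index _
  map_add' f g := sum_add_index f g _ (by simp) (by simp)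

variable {p : ℕ} {d : R →+ R}

@[simp]
theorem frobeniusDerivation_monomial (n : ℕ) (a : R) :
    frobeniusDerivation p d (monomial n a) = monomial (p * n) (d a) :=
  sum_monomial_index a (fun n a => monomial (p * n) (d a)) (by simp)

theorem frobeniusDerivation_C (a : R) : frobeniusDerivation p d (C a) = C (d a) := by
  simpa using frobeniusDerivation_monomial (p := p) (d := d) 0 a

theorem isFrobeniusDerivation_frobeniusDerivation [Fact p.Prime] [CharP R p]
    (hd : IsFrobeniusDerivation p d) : IsFrobeniusDerivation p (frobeniusDerivation p d) := by
  refine ⟨map_add _, fun f g => ?_⟩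
  induction f using Polynomial.induction_on' with
  | add f₁ f₂ h₁ h₂ => simp only [add_mul, map_add, h₁, h₂, add_pow_char]; ring
  | monomial i a =>
    induction g using Polynomial.induction_on' with
    | add g₁ g₂ h₁ h₂ => simp only [mul_add, map_add, h₁, h₂, add_pow_char]; ring
    | monomial j b =>
      simp only [monomial_mul_monomial, monomial_pow, frobeniusDerivation_monomial, hd.map_mul,
        map_add]
      ring_nf

end Polynomial

theorem stmt15_general {K L : Type*} [Field K] [Field L] (p : ℕ) [Fact p.Prime]
    [CharP K p] [Algebra K L]
    (t : K) (s : L) (hs : s ^ p = algebraMap K L t)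
    (hnotp : ∀ u : K, u ^ p ≠ t)
    (hgen : Algebra.adjoin K {s} = ⊤)
    (d : K → K) (hadd : ∀ x y, d (x + y) = d x + d y)
    (hleib : ∀ x y, d (x * y) = x ^ p * d y + y ^ p * d x)
    (ht : d t = 0) :
    ∃ D : L → L, (∀ x y, D (x + y) = D x + D y) ∧
      (∀ x y, D (x * y) = x ^ p * D y + y ^ p * D x) ∧
      (∀ a : K, D (algebraMap K L a) = algebraMap K L (d a)) ∧
      D s = 0 := by
  have hp : p.Prime := Fact.out
  have hd : IsFrobeniusDerivation p d := ⟨hadd, hleib⟩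
  set Δ := frobeniusDerivation p (AddMonoidHom.mk' d hadd)
  have hΔ : IsFrobeniusDerivation p Δ := isFrobeniusDerivation_frobeniusDerivation hd
  have hroot : aeval s (X ^ p - C t) = 0 := by simp [hs]
  have hmin : minpoly K s = X ^ p - C t :=
    (minpoly.eq_of_irreducible_of_monic (X_pow_sub_C_irreducible_of_prime hp hnotp) hroot
      (monic_X_pow_sub_C t hp.ne_zero)).symm
  have hΔmin : Δ (X ^ p - C t) = 0 := by
    rw [map_sub, ← monomial_one_right_eq_X_pow, frobeniusDerivation_monomial,
      frobeniusDerivation_C]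
    simp [hd.map_one, ht]
  have hker (f : K[X]) (hf : aeval s f = 0) : aeval s (Δ f) = 0 := by
    obtain ⟨g, rfl⟩ := hmin ▸ minpoly.dvd K s hf
    simp [hΔ.map_mul_of_eq_zero hΔmin, hroot, hp.ne_zero]
  have hsurj : Function.Surjective (aeval s : K[X] →ₐ[K] L) := by
    rw [← AlgHom.range_eq_top, ← Algebra.adjoin_singleton_eq_range_aeval, hgen]
  obtain ⟨D, hD, hDΔ⟩ := hΔ.exists_comp_eq_of_surjective (aeval s).toRingHom hsurj hker
  refine ⟨D, hD.map_add, hD.map_mul, fun a => ?_, ?_⟩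
  · simpa [Δ, frobeniusDerivation_C] using hDΔ (C a)
  · simpa [Δ, ← monomial_one_one_eq_X, hd.map_one] using hDΔ X

/-- A derivation of Frobenius on `K` with `d t = 0` extends to `L = K(t^{1/p})`
by sending the new generator to `0`. -/
theorem stmt15 {K L : Type*} [Field K] [Field L] (p : ℕ) [Fact p.Prime]
    [CharP K p] [CharP L p] [Algebra K L]
    (t : K) (s : L) (hs : s ^ p = algebraMap K L t)
    (hnotp : ∀ u : K, u ^ p ≠ t)
    (hgen : Algebra.adjoin K {s} = ⊤)
    (d : K → K) (hadd : ∀ x y, d (x + y) = d x + d y)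
    (hleib : ∀ x y, d (x * y) = x ^ p * d y + y ^ p * d x)
    (ht : d t = 0) :
    ∃ D : L → L, (∀ x y, D (x + y) = D x + D y) ∧
      (∀ x y, D (x * y) = x ^ p * D y + y ^ p * D x) ∧
      (∀ a : K, D (algebraMap K L a) = algebraMap K L (d a)) ∧
      D s = 0 :=
  stmt15_general p t s hs hnotp hgen d hadd hleib ht
end

section
/- Let k ⊆ K be a field extension, and let D(R) := R × R with the Frobenius-twisted dual-number multiplication over characteristic p. For K-algebras R, the functor R ↦ D^∂(R) (where D(R) has the K-algebra structure given by a fixed derivation of Frobenius ∂ on K, a ↦ (a, ∂a) followed by the map D(K) → D(R)) admits a left adjoint τ^∂ : Alg_K → Alg_K. Concretely, for R = K[X]/I, τ^∂(R) = K[X₀, X₁]/Ī where Ī is generated by ∂₀(f), ∂₁(f) for f ∈ I and (∂₀, ∂₁) is the unique extension of ∂ to a homomorphism K[X] → D(K[X₀, X₁]) sending X to (X₀, X₁). -/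
/-!
The prolongation `τ^d(R)` is presented by generators `u₀ r`, `u₁ r` for `r ∈ R`, subject to exactly
the relations saying that `r ↦ (u₀ r, u₁ r)` is a `K`-algebra homomorphism `R → D^d(τ^d(R))`.
A `K`-algebra map out of the polynomial algebra on these generators is a pair of maps `(f, g)`,
and it kills the relations iff `(f, g)` is a homomorphism `R → D^d(T)`; so the universal property of
the quotient is the adjunction.
-/

/-- The data of a `K`-algebra homomorphism `R → D^d(T)` into the Frobenius-twisted
dual numbers `D(T) = T × T` of a `K`-algebra `T`, where the `K`-algebra structure
on `D(T)` comes from `a ↦ (a, d a)`: it is a pair of maps `(f, g)`. -/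
def IsFrobDOpHom (p : ℕ) {K R T : Type} [Field K] [CommRing R] [CommRing T]
    [Algebra K R] [Algebra K T] (d : K → K) (f g : R → T) : Prop :=
  f 1 = 1 ∧ g 1 = 0 ∧
  (∀ x y, f (x + y) = f x + f y) ∧ (∀ x y, g (x + y) = g x + g y) ∧
  (∀ x y, f (x * y) = f x * f y) ∧
  (∀ x y, g (x * y) = (f x) ^ p * g y + (f y) ^ p * g x) ∧
  (∀ a : K, f (algebraMap K R a) = algebraMap K T a) ∧
  (∀ a : K, g (algebraMap K R a) = algebraMap K T (d a))

/-- A candidate value of the prolongation functor `τ^d` at `R`: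
a `K`-algebra together with a pair of maps `R → carrier`. -/
structure FrobProlongation (p : ℕ) (K : Type) [Field K] (d : K → K)
    (R : Type) [CommRing R] [Algebra K R] where
  carrier : Type
  [commRing : CommRing carrier]
  [algebra : Algebra K carrier]
  u₀ : R → carrier
  u₁ : R → carrier

attribute [instance] FrobProlongation.commRing FrobProlongation.algebra

open MvPolynomial

namespace FrobProlongation

variable (p : ℕ) {K : Type} [Field K] (d : K → K) (R : Type) [CommRing R] [Algebra K R]

def relations : Set (MvPolynomial (R ⊕ R) K) :=
  {X (.inl 1) - 1, X (.inr 1)} ∪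
  Set.range (fun x : R × R => X (.inl (x.1 + x.2)) - (X (.inl x.1) + X (.inl x.2))) ∪
  Set.range (fun x : R × R => X (.inr (x.1 + x.2)) - (X (.inr x.1) + X (.inr x.2))) ∪
  Set.range (fun x : R × R => X (.inl (x.1 * x.2)) - X (.inl x.1) * X (.inl x.2)) ∪
  Set.range (fun x : R × R => X (.inr (x.1 * x.2)) -
    (X (.inl x.1) ^ p * X (.inr x.2) + X (.inl x.2) ^ p * X (.inr x.1))) ∪
  Set.range (fun a : K => X (.inl (algebraMap K R a)) - C a) ∪
  Set.range (fun a : K => X (.inr (algebraMap K R a)) - C (d a))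

variable {p d R}

theorem relations_subset_ker_iff {T : Type} [CommRing T] [Algebra K T]
    (φ : MvPolynomial (R ⊕ R) K →ₐ[K] T) :
    relations p d R ⊆ RingHom.ker φ ↔
      IsFrobDOpHom p d (fun r => φ (X (.inl r))) (fun r => φ (X (.inr r))) := by
  simp only [relations, Set.union_subset_iff, Set.insert_subset_iff, Set.singleton_subset_iff,
    Set.range_subset_iff, Prod.forall, SetLike.mem_coe, RingHom.mem_ker, map_sub,
    sub_eq_zero, map_add, map_mul, map_pow, map_one, algHom_C, and_assoc, IsFrobDOpHom]

variable (p d R) in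
noncomputable def tau : FrobProlongation p K d R where
  carrier := MvPolynomial (R ⊕ R) K ⧸ Ideal.span (relations p d R)
  u₀ r := Ideal.Quotient.mk _ (X (.inl r))
  u₁ r := Ideal.Quotient.mk _ (X (.inr r))

theorem isFrobDOpHom_tau : IsFrobDOpHom p d (tau p d R).u₀ (tau p d R).u₁ :=
  (relations_subset_ker_iff (Ideal.Quotient.mkₐ K _)).1 fun _ hq =>
    Ideal.Quotient.eq_zero_iff_mem.2 (Ideal.subset_span hq)

variable {T : Type} [CommRing T] [Algebra K T] {f g : R → T}

noncomputable def tauLift (hfg : IsFrobDOpHom p d f g) : (tau p d R).carrier →ₐ[K] T :=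
  Ideal.Quotient.liftₐ _ (aeval (Sum.elim f g)) fun _ hq =>
    Ideal.span_le.2 ((relations_subset_ker_iff _).2 <| by
      simpa only [aeval_X, Sum.elim_inl, Sum.elim_inr] using hfg) hq

@[simp]
theorem tauLift_u₀ (hfg : IsFrobDOpHom p d f g) (r : R) : tauLift hfg ((tau p d R).u₀ r) = f r :=
  aeval_X (Sum.elim f g) (.inl r)

@[simp]
theorem tauLift_u₁ (hfg : IsFrobDOpHom p d f g) (r : R) : tauLift hfg ((tau p d R).u₁ r) = g r :=
  aeval_X (Sum.elim f g) (.inr r)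

theorem tau_algHom_ext {h h' : (tau p d R).carrier →ₐ[K] T}
    (h₀ : ∀ r, h ((tau p d R).u₀ r) = h' ((tau p d R).u₀ r))
    (h₁ : ∀ r, h ((tau p d R).u₁ r) = h' ((tau p d R).u₁ r)) : h = h' :=
  Ideal.Quotient.algHom_ext K <| MvPolynomial.algHom_ext <| by
    rintro (r | r)
    exacts [h₀ r, h₁ r]

end FrobProlongation

theorem stmt16_general (p : ℕ) {K : Type} [Field K]
    (d : K → K)
    (R : Type) [CommRing R] [Algebra K R] :
    ∃ E : FrobProlongation p K d R,
      IsFrobDOpHom p d E.u₀ E.u₁ ∧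
      ∀ (T : Type) [CommRing T] [Algebra K T] (f g : R → T),
        IsFrobDOpHom p d f g →
        ∃! h : E.carrier →ₐ[K] T,
          (∀ r, f r = h (E.u₀ r)) ∧ ∀ r, g r = h (E.u₁ r) := by
  refine ⟨FrobProlongation.tau p d R, FrobProlongation.isFrobDOpHom_tau,
    fun T _ _ f g hfg => ⟨FrobProlongation.tauLift hfg, by simp, ?_⟩⟩
  rintro h ⟨hf, hg⟩
  exact FrobProlongation.tau_algHom_ext (by simp [hf]) (by simp [hg])

/-- The functor `T ↦ D^d(T)` admits a left adjoint `τ^d`, expressed through the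
universal property: for every `K`-algebra `R` there is a `K`-algebra `τ^d(R)` with a
universal homomorphism `R → D^d(τ^d(R))`, inducing a natural bijection
`Hom_{Alg_K}(R, D^d(T)) ≅ Hom_{Alg_K}(τ^d(R), T)`. -/
theorem stmt16 (p : ℕ) [Fact p.Prime] {K : Type} [Field K] [CharP K p]
    (d : K → K) (hadd : ∀ x y, d (x + y) = d x + d y)
    (hleib : ∀ x y, d (x * y) = x ^ p * d y + y ^ p * d x)
    (R : Type) [CommRing R] [Algebra K R] :
    ∃ E : FrobProlongation p K d R,
      IsFrobDOpHom p d E.u₀ E.u₁ ∧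
      ∀ (T : Type) [CommRing T] [Algebra K T] (f g : R → T),
        IsFrobDOpHom p d f g →
        ∃! h : E.carrier →ₐ[K] T,
          (∀ r, f r = h (E.u₀ r)) ∧ ∀ r, g r = h (E.u₁ r) :=
  stmt16_general p d R
end

section
/- Let L be a field of characteristic p, B a commutative ring with maps ι : L → B, π : B → L, π ∘ ι = id, such that b^p = 0 for all b ∈ ker(π). Let K ⊆ M ⊆ N be fields with N/M purely inseparable of exponent 1 (N^p ⊆ M), and let ∂ : M → B be a ring homomorphism into a ring of the above type over N (i.e., π : B → N, ι : N → B) such that π ∘ ∂ is the inclusion M ⊆ N and ∂(a) = ι(a) for all a ∈ N^p. Then ∂ extends to a ring homomorphism ∂_N : N → B with π ∘ ∂_N = id_N. -/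
/-!
Partial lifts of the inclusion `M ⊆ N` through `π` are encoded by their graphs, subrings of
`N × B`, so that Zorn's lemma applies to them directly. A maximal lift is defined on all of `N`:
if `x` is missing from its domain `F`, then `x ^ p ∈ M ⊆ F`, the polynomial `X ^ p - x ^ p` is
irreducible over `F`, and `ι x` is a root of its image in `B` because
`(ι x) ^ p = ι (x ^ p) = ∂ (x ^ p)`; so `x ↦ ι x` extends the lift to
`F(x) ≅ F[X] ⧸ (X ^ p - x ^ p)`.
-/

open Polynomial

section LiftGraph

variable {N B : Type*} [Field N] [CommRing B] (π : B →+* N)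

/-- `G` is the graph of a ring homomorphism `D : F →+* B` with `π ∘ D = id`, defined on a
subfield `F` of `N`. -/
structure IsLiftGraph (G : Subring (N × B)) : Prop where
  map_snd : ∀ z ∈ G, π z.2 = z.1
  eq_zero_of_mem : ∀ b : B, ((0 : N), b) ∈ G → b = 0
  exists_inv_mem : ∀ z ∈ G, ∃ b : B, (z.1⁻¹, b) ∈ G

variable {π}

theorem isLiftGraph_range_prod {K : Type*} [Field K] (f : K →+* N) (g : K →+* B)
    (hfg : ∀ k, π (g k) = f k) : IsLiftGraph π (f.prod g).range where
  map_snd := by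
    rintro _ ⟨k, rfl⟩
    exact hfg k
  eq_zero_of_mem := by
    rintro b ⟨k, hk⟩
    obtain rfl : k = 0 := f.injective (by simpa using congrArg Prod.fst hk)
    simpa using (congrArg Prod.snd hk).symm
  exists_inv_mem := by
    rintro _ ⟨k, rfl⟩
    exact ⟨g k⁻¹, k⁻¹, by simp⟩

theorem isLiftGraph_sSup {c : Set (Subring (N × B))} (hc : IsChain (· ≤ ·) c)
    (hne : c.Nonempty) (h : ∀ G ∈ c, IsLiftGraph π G) : IsLiftGraph π (sSup c) := by
  have mem_sSup {z} : z ∈ sSup c ↔ ∃ G ∈ c, z ∈ G :=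
    Subring.mem_sSup_of_directedOn hne hc.directedOn
  refine ⟨fun z hz => ?_, fun b hb => ?_, fun z hz => ?_⟩
  · obtain ⟨G, hG, hzG⟩ := mem_sSup.mp hz
    exact (h G hG).map_snd z hzG
  · obtain ⟨G, hG, hbG⟩ := mem_sSup.mp hb
    exact (h G hG).eq_zero_of_mem b hbG
  · obtain ⟨G, hG, hzG⟩ := mem_sSup.mp hz
    obtain ⟨b, hb⟩ := (h G hG).exists_inv_mem z hzG
    exact ⟨b, le_sSup hG hb⟩

namespace IsLiftGraph

variable {G : Subring (N × B)}

theorem snd_unique (hG : IsLiftGraph π G) {x : N} {b b' : B} (hb : (x, b) ∈ G)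
    (hb' : (x, b') ∈ G) : b = b' :=
  sub_eq_zero.mp <| hG.eq_zero_of_mem _ <| by simpa using G.sub_mem hb hb'

def domain (hG : IsLiftGraph π G) : Subfield N where
  carrier := {x | ∃ b, (x, b) ∈ G}
  zero_mem' := ⟨0, G.zero_mem⟩
  one_mem' := ⟨1, G.one_mem⟩
  add_mem' := fun ⟨b, hb⟩ ⟨b', hb'⟩ => ⟨b + b', G.add_mem hb hb'⟩
  mul_mem' := fun ⟨b, hb⟩ ⟨b', hb'⟩ => ⟨b * b', G.mul_mem hb hb'⟩
  neg_mem' := fun ⟨b, hb⟩ => ⟨-b, G.neg_mem hb⟩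
  inv_mem' := fun _ ⟨_, hb⟩ => hG.exists_inv_mem _ hb

theorem mem_domain_of_mem (hG : IsLiftGraph π G) {x : N} {b : B} (h : (x, b) ∈ G) :
    x ∈ hG.domain :=
  ⟨b, h⟩

noncomputable def lift (hG : IsLiftGraph π G) : hG.domain →+* B where
  toFun y := y.2.choose
  map_one' := hG.snd_unique (Subtype.prop (1 : hG.domain)).choose_spec G.one_mem
  map_mul' y y' :=
    hG.snd_unique (y * y').2.choose_spec (G.mul_mem y.2.choose_spec y'.2.choose_spec)
  map_zero' := hG.snd_unique (Subtype.prop (0 : hG.domain)).choose_spec G.zero_mem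
  map_add' y y' :=
    hG.snd_unique (y + y').2.choose_spec (G.add_mem y.2.choose_spec y'.2.choose_spec)

theorem mk_lift_mem (hG : IsLiftGraph π G) (y : hG.domain) : ((y : N), hG.lift y) ∈ G :=
  y.2.choose_spec

theorem lift_eq_of_mem (hG : IsLiftGraph π G) {x : N} {b : B} (h : (x, b) ∈ G) :
    hG.lift ⟨x, hG.mem_domain_of_mem h⟩ = b :=
  hG.snd_unique (hG.mk_lift_mem _) h

theorem map_lift (hG : IsLiftGraph π G) (y : hG.domain) : π (hG.lift y) = y :=
  hG.map_snd _ (hG.mk_lift_mem y)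

theorem exists_le_of_irreducible (hG : IsLiftGraph π G) {q : hG.domain[X]} (hq : Irreducible q)
    {x : N} {β : B}
    (hx : q.eval₂ hG.domain.subtype x = 0) (hβ : q.eval₂ hG.lift β = 0) (hπβ : π β = x) :
    ∃ G', IsLiftGraph π G' ∧ G ≤ G' ∧ (x, β) ∈ G' := by
  have : Fact (Irreducible q) := ⟨hq⟩
  let ψ := (AdjoinRoot.lift _ x hx).prod (AdjoinRoot.lift _ β hβ)
  have hψ_of (y : hG.domain) : ψ (AdjoinRoot.of q y) = ((y : N), hG.lift y) := by
    simp [ψ, AdjoinRoot.lift_of]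
  refine ⟨ψ.range, isLiftGraph_range_prod _ _ fun a => ?_, fun z hz => ?_,
    ⟨AdjoinRoot.root q, by simp [ψ, AdjoinRoot.lift_root]⟩⟩
  · have hcomp : π.comp (AdjoinRoot.lift _ β hβ) = AdjoinRoot.lift _ x hx :=
      AdjoinRoot.ringHom_ext (RingHom.ext fun y => by simp [AdjoinRoot.lift_of, hG.map_lift])
        (by simp [AdjoinRoot.lift_root, hπβ])
    exact RingHom.congr_fun hcomp a
  · refine ⟨AdjoinRoot.of q ⟨z.1, hG.mem_domain_of_mem hz⟩, ?_⟩
    rw [hψ_of, hG.lift_eq_of_mem hz]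

end IsLiftGraph

theorem exists_maximal_isLiftGraph (M : Subfield N) (d : M →+* B)
    (hd : ∀ m, π (d m) = m) :
    ∃ G : Subring (N × B), IsLiftGraph π G ∧ (∀ m : M, ((m : N), d m) ∈ G) ∧
      ∀ G', IsLiftGraph π G' → G ≤ G' → G' ≤ G := by
  let S := {G : Subring (N × B) | IsLiftGraph π G ∧ ∀ m : M, ((m : N), d m) ∈ G}
  have hS₀ : (M.subtype.prod d).range ∈ S :=
    ⟨isLiftGraph_range_prod _ _ hd, fun m => ⟨m, rfl⟩⟩
  obtain ⟨G, hG₀, hG, hGmax⟩ := zorn_le_nonempty₀ S (fun c hcS hc G₁ hG₁ =>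
    ⟨sSup c, ⟨isLiftGraph_sSup hc ⟨G₁, hG₁⟩ fun G hG => (hcS hG).1,
      fun m => le_sSup hG₁ ((hcS hG₁).2 m)⟩, fun _ => le_sSup⟩) _ hS₀
  exact ⟨G, hG.1, hG.2, fun G' hG' hGG' => hGmax ⟨hG', fun m => hGG' (hG.2 m)⟩ hGG'⟩

end LiftGraph

theorem irreducible_X_pow_sub_C_of_notMem {K : Type*} [Field K] (p : ℕ) [Fact p.Prime]
    [CharP K p] (F : Subfield K) {x : K} (hx : x ∉ F) (hxp : x ^ p ∈ F) :
    Irreducible (X ^ p - C ⟨x ^ p, hxp⟩ : F[X]) := by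
  refine X_pow_sub_C_irreducible_of_prime Fact.out fun y hy => hx ?_
  have hyx : (y : K) = x :=
    frobenius_inj K p (by simpa [frobenius_def] using congrArg Subtype.val hy)
  exact hyx ▸ y.2

theorem stmt19_general {N Bb : Type*} [Field N] [CommRing Bb] (p : ℕ) [Fact p.Prime]
    [CharP N p]
    (ι : N →+* Bb) (π : Bb →+* N) (hπι : ∀ x, π (ι x) = x)
    (M : Subfield N) (hMp : ∀ x : N, x ^ p ∈ M)
    (d : M →+* Bb) (hd : ∀ m : M, π (d m) = (m : N))
    (hconst : ∀ x : N, d ⟨x ^ p, hMp x⟩ = ι (x ^ p)) :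
    ∃ D : N →+* Bb, (∀ x : N, π (D x) = x) ∧ ∀ m : M, D (m : N) = d m := by
  obtain ⟨G, hG, hdG, hGmax⟩ := exists_maximal_isLiftGraph M d hd
  have hdom (x : N) : x ∈ hG.domain := by
    by_contra hx
    have hxp : x ^ p ∈ hG.domain := hG.mem_domain_of_mem (hdG ⟨x ^ p, hMp x⟩)
    have hlift : hG.lift ⟨x ^ p, hxp⟩ = ι x ^ p :=
      (hG.lift_eq_of_mem (hdG ⟨x ^ p, hMp x⟩)).trans (by rw [hconst, map_pow])
    obtain ⟨G', hG', hGG', hxG'⟩ := hG.exists_le_of_irreducible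
      (irreducible_X_pow_sub_C_of_notMem p _ hx hxp) (x := x) (β := ι x)
      (by simp) (by simp [hlift]) (hπι x)
    exact hx (hG.mem_domain_of_mem (hGmax G' hG' hGG' hxG'))
  refine ⟨hG.lift.comp ((RingHom.id N).codRestrict hG.domain hdom),
    fun x => hG.map_lift _, fun m => hG.lift_eq_of_mem (hdG m)⟩

/-- Extension of `B`-operators along a purely inseparable extension of exponent one
whose `p`-th powers are constants. -/
theorem stmt19 {N Bb : Type*} [Field N] [CommRing Bb] (p : ℕ) [Fact p.Prime]
    [CharP N p]
    (ι : N →+* Bb) (π : Bb →+* N) (hπι : ∀ x, π (ι x) = x)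
    (hker : ∀ b : Bb, π b = 0 → b ^ p = 0)
    (M : Subfield N) (hMp : ∀ x : N, x ^ p ∈ M)
    (d : M →+* Bb) (hd : ∀ m : M, π (d m) = (m : N))
    (hconst : ∀ x : N, d ⟨x ^ p, hMp x⟩ = ι (x ^ p)) :
    ∃ D : N →+* Bb, (∀ x : N, π (D x) = x) ∧ ∀ m : M, D (m : N) = d m :=
  stmt19_general p ι π hπι M hMp d hd hconst
end
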